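/- Define F(x) = exp(-2πλ_R (x - ∫_0^x exp(-2λ_S √(x² - r²)) dr)) for x ≥ 0. Then F is differentiable on (0,∞) and -F'(x) = 2πλ_R exp(-2πλ_R (x - ∫_0^x exp(-2λ_S √(x²-r²)) dr)) · 2λ_S x ∫_0^x exp(-2λ_S √(x²-r²)) / √(x²-r²) dr, provided the latter integral converges (which it does, being dominated near r = x by an integrable singularity). -/

import Mathlib

/-!
Substituting `r = y s` turns `∫₀^y exp (-c √(y² - r²)) dr` into `y Φ(y)` with
`Φ(y) = ∫₀¹ exp (-c y √(1 - s²)) ds`, whose integrand is smooth in `y`, so `Φ` is differentiated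
under the integral sign. The singular integral appears only after integrating
`d/ds (s exp (-a √(1 - s²))) = exp (-a √(1 - s²)) + a s² exp (-a √(1 - s²)) / √(1 - s²)`
over `[0, 1]`, which gives `1 - (y Φ)'(y) = c y ∫₀¹ exp (-c y √(1 - s²)) / √(1 - s²) ds`;
the same substitution leaves `dr / √(y² - r²)` invariant.
-/

open MeasureTheory intervalIntegral Real Set Filter Topology

lemma sqrt_sq_sub_mul_sq {y : ℝ} (hy : 0 ≤ y) (s : ℝ) :
    √(y ^ 2 - (y * s) ^ 2) = y * √(1 - s ^ 2) := by
  rw [show y ^ 2 - (y * s) ^ 2 = y ^ 2 * (1 - s ^ 2) by ring, sqrt_mul (sq_nonneg y), sqrt_sq hy]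

section Substitution

variable {E : Type*} [NormedAddCommGroup E] {y : ℝ}

lemma integral_comp_sqrt_sq_sub_sq [NormedSpace ℝ E] (g : ℝ → E) (hy : 0 < y) :
    ∫ r in (0:ℝ)..y, g √(y ^ 2 - r ^ 2) = y • ∫ s in (0:ℝ)..1, g (y * √(1 - s ^ 2)) := by
  have h := integral_comp_mul_left (fun r => g √(y ^ 2 - r ^ 2)) hy.ne' (a := 0) (b := 1)
  simp only [sqrt_sq_sub_mul_sq hy.le, mul_zero, mul_one] at h
  rw [h, smul_inv_smul₀ hy.ne']

lemma IntervalIntegrable.comp_sqrt_sq_sub_sq {g : ℝ → E} (hy : 0 < y)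
    (hg : IntervalIntegrable (fun r => g √(y ^ 2 - r ^ 2)) volume 0 y) :
    IntervalIntegrable (fun s => g (y * √(1 - s ^ 2))) volume 0 1 := by
  simpa only [sqrt_sq_sub_mul_sq hy.le, zero_div, div_self hy.ne'] using
    hg.comp_mul_left (c := y)

end Substitution

section Singular

variable {f : ℝ → ℝ} {y : ℝ}

lemma div_sqrt_sq_sub_sq_comp_mul (hy : 0 < y) (s : ℝ) :
    y * (f (y * √(1 - s ^ 2)) / (y * √(1 - s ^ 2))) = f (y * √(1 - s ^ 2)) / √(1 - s ^ 2) := by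
  rw [mul_div_assoc', mul_div_mul_left _ _ hy.ne']

lemma integral_div_sqrt_sq_sub_sq (hy : 0 < y) :
    ∫ r in (0:ℝ)..y, f √(y ^ 2 - r ^ 2) / √(y ^ 2 - r ^ 2) =
      ∫ s in (0:ℝ)..1, f (y * √(1 - s ^ 2)) / √(1 - s ^ 2) := by
  rw [integral_comp_sqrt_sq_sub_sq (fun t => f t / t) hy, smul_eq_mul,
    ← intervalIntegral.integral_const_mul]
  simp only [div_sqrt_sq_sub_sq_comp_mul hy]

lemma IntervalIntegrable.div_sqrt_sq_sub_sq (hy : 0 < y)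
    (hf : IntervalIntegrable (fun r => f √(y ^ 2 - r ^ 2) / √(y ^ 2 - r ^ 2)) volume 0 y) :
    IntervalIntegrable (fun s => f (y * √(1 - s ^ 2)) / √(1 - s ^ 2)) volume 0 1 := by
  simpa only [div_sqrt_sq_sub_sq_comp_mul hy] using
    ((hf.comp_sqrt_sq_sub_sq (g := fun t => f t / t) hy).const_mul y)

end Singular

lemma hasDerivAt_integral_exp_neg_mul_mul_sqrt_one_sub_sq (c x : ℝ) :
    HasDerivAt (fun y => ∫ s in (0:ℝ)..1, exp (-(c * (y * √(1 - s ^ 2)))))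
      (-(c * ∫ s in (0:ℝ)..1, √(1 - s ^ 2) * exp (-(c * (x * √(1 - s ^ 2)))))) x := by
  have hbound : ∀ s ∈ uIoc (0:ℝ) 1, ∀ y ∈ Metric.ball x 1,
      ‖-(c * (√(1 - s ^ 2) * exp (-(c * (y * √(1 - s ^ 2))))))‖ ≤ |c| * exp (|c| * (|x| + 1)) := by
    intro s hs y hy
    rw [uIoc_of_le zero_le_one] at hs
    have hsqrt : √(1 - s ^ 2) ≤ 1 := sqrt_le_one.mpr (by nlinarith [hs.1, hs.2])
    have hy' : |y| ≤ |x| + 1 := by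
      have := abs_sub_abs_le_abs_sub y x
      rw [Metric.mem_ball, dist_eq] at hy
      linarith
    have hexp : -(c * (y * √(1 - s ^ 2))) ≤ |c| * (|x| + 1) :=
      calc -(c * (y * √(1 - s ^ 2))) ≤ |c| * (|y| * √(1 - s ^ 2)) := by
            have h := neg_le_abs (c * (y * √(1 - s ^ 2)))
            rwa [abs_mul, abs_mul, abs_of_nonneg (sqrt_nonneg _)] at h
        _ ≤ |c| * (|x| + 1) := by gcongr; nlinarith [abs_nonneg y, sqrt_nonneg (1 - s ^ 2)]
    rw [norm_neg, norm_mul, norm_mul, Real.norm_eq_abs, Real.norm_eq_abs, Real.norm_eq_abs,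
      abs_of_nonneg (sqrt_nonneg _), abs_of_pos (exp_pos _)]
    gcongr
    calc √(1 - s ^ 2) * exp (-(c * (y * √(1 - s ^ 2)))) ≤ 1 * exp (|c| * (|x| + 1)) := by
          gcongr
      _ = _ := one_mul _
  have h := hasDerivAt_integral_of_dominated_loc_of_deriv_le (μ := volume) (a := 0) (b := 1)
    (F := fun y s => exp (-(c * (y * √(1 - s ^ 2)))))
    (F' := fun y s => -(c * (√(1 - s ^ 2) * exp (-(c * (y * √(1 - s ^ 2)))))))
    (Metric.ball_mem_nhds x one_pos) (.of_forall fun y => by fun_prop)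
    (by apply Continuous.intervalIntegrable; fun_prop) (by fun_prop) (.of_forall hbound)
    intervalIntegrable_const
    (.of_forall fun s _ y _ =>
      (((hasDerivAt_mul_const (√(1 - s ^ 2))).const_mul c).neg.exp).congr_deriv
        (by simp only [Pi.neg_apply]; ring))
  simpa only [intervalIntegral.integral_neg, intervalIntegral.integral_const_mul] using h.2

lemma hasDerivAt_mul_exp_neg_mul_sqrt_one_sub_sq (a : ℝ) {s : ℝ} (hs : s ∈ Ioo (0:ℝ) 1) :
    HasDerivAt (fun s => s * exp (-(a * √(1 - s ^ 2))))
      (exp (-(a * √(1 - s ^ 2))) +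
        a * (exp (-(a * √(1 - s ^ 2))) / √(1 - s ^ 2) - √(1 - s ^ 2) * exp (-(a * √(1 - s ^ 2)))))
      s := by
  have hpos : 0 < 1 - s ^ 2 := by nlinarith [hs.1, hs.2]
  have hsqrt : √(1 - s ^ 2) ^ 2 = 1 - s ^ 2 := sq_sqrt hpos.le
  have h := (hasDerivAt_id s).mul
    ((((hasDerivAt_sqrt hpos.ne').comp s ((hasDerivAt_pow 2 s).const_sub 1)).const_mul a).neg.exp)
  refine h.congr_deriv ?_
  have hsqrt_ne : √(1 - s ^ 2) ≠ 0 := (sqrt_pos.mpr hpos).ne'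
  simp only [id, Pi.neg_apply, Function.comp_apply]
  field_simp
  linear_combination (2 * a) * hsqrt

lemma integral_exp_neg_mul_sqrt_one_sub_sq_add_mul_eq_one (a : ℝ)
    (h : IntervalIntegrable (fun s => exp (-(a * √(1 - s ^ 2))) / √(1 - s ^ 2)) volume 0 1) :
    (∫ s in (0:ℝ)..1, exp (-(a * √(1 - s ^ 2)))) +
      a * ((∫ s in (0:ℝ)..1, exp (-(a * √(1 - s ^ 2))) / √(1 - s ^ 2)) -
        ∫ s in (0:ℝ)..1, √(1 - s ^ 2) * exp (-(a * √(1 - s ^ 2)))) = 1 := by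
  have hexp : IntervalIntegrable (fun s => exp (-(a * √(1 - s ^ 2)))) volume 0 1 :=
    Continuous.intervalIntegrable (by fun_prop) 0 1
  have hsqrt : IntervalIntegrable (fun s => √(1 - s ^ 2) * exp (-(a * √(1 - s ^ 2)))) volume 0 1 :=
    Continuous.intervalIntegrable (by fun_prop) 0 1
  have hftc := integral_eq_sub_of_hasDeriv_right_of_le zero_le_one
    (Continuous.continuousOn (by fun_prop))
    (fun s hs => (hasDerivAt_mul_exp_neg_mul_sqrt_one_sub_sq a hs).hasDerivWithinAt)
    (hexp.add ((h.sub hsqrt).const_mul a))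
  rw [integral_add hexp ((h.sub hsqrt).const_mul a), intervalIntegral.integral_const_mul,
    integral_sub h hsqrt] at hftc
  simpa using hftc

theorem stmt6_general (lamR lamS : ℝ)
    (F : ℝ → ℝ)
    (hF : ∀ x : ℝ, F x = Real.exp (-(2 * Real.pi * lamR *
      (x - ∫ r in (0:ℝ)..x, Real.exp (-(2 * lamS * Real.sqrt (x ^ 2 - r ^ 2)))))))
    (x : ℝ) (hx : 0 < x)
    (hint : IntervalIntegrable
      (fun r => Real.exp (-(2 * lamS * Real.sqrt (x ^ 2 - r ^ 2))) / Real.sqrt (x ^ 2 - r ^ 2))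
      volume 0 x) :
    HasDerivAt F
      (-(2 * Real.pi * lamR *
          Real.exp (-(2 * Real.pi * lamR *
            (x - ∫ r in (0:ℝ)..x, Real.exp (-(2 * lamS * Real.sqrt (x ^ 2 - r ^ 2)))))) *
          (2 * lamS * x *
            ∫ r in (0:ℝ)..x,
              Real.exp (-(2 * lamS * Real.sqrt (x ^ 2 - r ^ 2))) / Real.sqrt (x ^ 2 - r ^ 2))))
      x := by
  set Φ : ℝ → ℝ := fun y => ∫ s in (0:ℝ)..1, exp (-(2 * lamS * (y * √(1 - s ^ 2))))
  have hscale : ∀ y, 0 < y → ∫ r in (0:ℝ)..y, exp (-(2 * lamS * √(y ^ 2 - r ^ 2))) = y * Φ y :=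
    fun y hy => integral_comp_sqrt_sq_sub_sq (fun t => exp (-(2 * lamS * t))) hy
  have hFeq : F =ᶠ[𝓝 x] fun y => exp (-(2 * π * lamR * (y - y * Φ y))) := by
    filter_upwards [Ioi_mem_nhds hx] with y hy
    rw [hF, hscale y hy]
  have hderiv := ((((hasDerivAt_id x).sub ((hasDerivAt_id x).mul
    (hasDerivAt_integral_exp_neg_mul_mul_sqrt_one_sub_sq (2 * lamS) x))).const_mul
      (2 * π * lamR)).neg.exp).congr_of_eventuallyEq hFeq
  have hsing := integral_div_sqrt_sq_sub_sq (f := fun t => exp (-(2 * lamS * t))) hx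
  have hkey := integral_exp_neg_mul_sqrt_one_sub_sq_add_mul_eq_one (2 * lamS * x)
    (by simpa only [mul_assoc (2 * lamS) x] using
      hint.div_sqrt_sq_sub_sq (f := fun t => exp (-(2 * lamS * t))) hx)
  simp only [mul_assoc (2 * lamS) x] at hkey
  refine hderiv.congr_deriv ?_
  simp only [Pi.neg_apply, Pi.sub_apply, Pi.mul_apply, id]
  rw [hscale x hx, hsing]
  linear_combination 2 * π * lamR * exp (-(2 * π * lamR * (x - x * Φ x))) * hkey

/-- Differentiating the void-probability function
`F x = exp (-2 π lamR (x - ∫₀ˣ exp (-2 lamS √(x²-r²)) dr))`: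
`-F' x = 2 π lamR F x · 2 lamS x ∫₀ˣ exp (-2 lamS √(x²-r²)) / √(x²-r²) dr`,
provided the latter (singular) integral converges. -/
theorem stmt6 (lamR lamS : ℝ) (hR : 0 < lamR) (hS : 0 < lamS)
    (F : ℝ → ℝ)
    (hF : ∀ x : ℝ, F x = Real.exp (-(2 * Real.pi * lamR *
      (x - ∫ r in (0:ℝ)..x, Real.exp (-(2 * lamS * Real.sqrt (x ^ 2 - r ^ 2)))))))
    (x : ℝ) (hx : 0 < x)
    (hint : IntervalIntegrable
      (fun r => Real.exp (-(2 * lamS * Real.sqrt (x ^ 2 - r ^ 2))) / Real.sqrt (x ^ 2 - r ^ 2))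
      volume 0 x) :
    HasDerivAt F
      (-(2 * Real.pi * lamR *
          Real.exp (-(2 * Real.pi * lamR *
            (x - ∫ r in (0:ℝ)..x, Real.exp (-(2 * lamS * Real.sqrt (x ^ 2 - r ^ 2)))))) *
          (2 * lamS * x *
            ∫ r in (0:ℝ)..x,
              Real.exp (-(2 * lamS * Real.sqrt (x ^ 2 - r ^ 2))) / Real.sqrt (x ^ 2 - r ^ 2))))
      x :=
  stmt6_general lamR lamS F hF x hx hint
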